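/- arXiv:1204.3249 — 6 statements merged into one kernel-verified Lean document; each statement's English description precedes it below -/
import Mathlib

section
/- Splitting bisimilarity is an equivalence relation on the set of conditional transition systems: it is reflexive, symmetric, and transitive. -/
/-- A conditional transition system over a (complete) Boolean algebra `C` of
conditions and a set `Act` of actions: transition relations labelled by a
condition and an action, termination relations labelled by a condition, and an
initial state. -/
structure CTS (C : Type*) (Act : Type*) (S : Type*) where
  tr : C → Act → S → S → Prop
  term : C → S → Prop
  init : S

/-- `B` is a splitting bisimulation between `T₁` and `T₂`. -/
def IsSB {C Act S₁ S₂ : Type*} [CompleteBooleanAlgebra C]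
    (T₁ : CTS C Act S₁) (T₂ : CTS C Act S₂) (B : S₁ → S₂ → Prop) : Prop :=
  B T₁.init T₂.init ∧
  ∀ s₁ s₂, B s₁ s₂ →
    (∀ α a s₁', T₁.tr α a s₁ s₁' → ∃ CS : Set (C × S₂),
      α ≤ sSup (Prod.fst '' CS) ∧ ∀ p ∈ CS, T₂.tr p.1 a s₂ p.2 ∧ B s₁' p.2) ∧
    (∀ α a s₂', T₂.tr α a s₂ s₂' → ∃ CS : Set (C × S₁),
      α ≤ sSup (Prod.fst '' CS) ∧ ∀ p ∈ CS, T₁.tr p.1 a s₁ p.2 ∧ B p.2 s₂') ∧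
    (∀ α, T₁.term α s₁ → ∃ Cs : Set C,
      α ≤ sSup Cs ∧ ∀ α' ∈ Cs, T₂.term α' s₂) ∧
    (∀ α, T₂.term α s₂ → ∃ Cs : Set C,
      α ≤ sSup Cs ∧ ∀ α' ∈ Cs, T₁.term α' s₁)

/-- Two conditional transition systems are splitting bisimilar if there exists
a splitting bisimulation between them. -/
def SBisim {C Act S₁ S₂ : Type*} [CompleteBooleanAlgebra C]
    (T₁ : CTS C Act S₁) (T₂ : CTS C Act S₂) : Prop :=
  ∃ B, IsSB T₁ T₂ B

/-!
Each clause of a splitting bisimulation says that a condition `α` lies below the supremum of the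
conditions under which the other system can answer. Stated that way, a splitting bisimulation is a
pair of mutually converse splitting simulations, and simulations compose because
`α ≤ sSup s` and `s ≤ sSup t` pointwise give `α ≤ sSup t`: the covering of a covering is a covering.
-/

section Cover

variable {L X : Type*} [CompleteLattice L]

theorem exists_le_sSup_forall_mem_iff {a : L} {Q : L → Prop} :
    (∃ s : Set L, a ≤ sSup s ∧ ∀ b ∈ s, Q b) ↔ a ≤ sSup {b | Q b} :=
  ⟨fun ⟨_, hle, hs⟩ => hle.trans (sSup_le_sSup hs), fun h => ⟨_, h, fun _ => id⟩⟩

theorem exists_le_sSup_image_fst_iff {a : L} {P : L × X → Prop} :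
    (∃ s : Set (L × X), a ≤ sSup (Prod.fst '' s) ∧ ∀ p ∈ s, P p) ↔
      a ≤ sSup {b | ∃ x, P (b, x)} := by
  constructor
  · rintro ⟨s, hle, hs⟩
    refine hle.trans (sSup_le_sSup ?_)
    rintro _ ⟨p, hp, rfl⟩
    exact ⟨p.2, hs p hp⟩
  · intro h
    refine ⟨{p | P p}, h.trans (sSup_le_sSup ?_), fun _ => id⟩
    rintro b ⟨x, hx⟩
    exact ⟨(b, x), hx, rfl⟩

end Cover

namespace CTS

variable {C Act S₁ S₂ S₃ : Type*} [CompleteBooleanAlgebra C]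

def IsSplittingSim (T₁ : CTS C Act S₁) (T₂ : CTS C Act S₂) (B : S₁ → S₂ → Prop) : Prop :=
  ∀ s₁ s₂, B s₁ s₂ →
    (∀ α a s₁', T₁.tr α a s₁ s₁' → α ≤ sSup {β | ∃ s₂', T₂.tr β a s₂ s₂' ∧ B s₁' s₂'}) ∧
    (∀ α, T₁.term α s₁ → α ≤ sSup {β | T₂.term β s₂})

theorem isSB_iff {T₁ : CTS C Act S₁} {T₂ : CTS C Act S₂} {B : S₁ → S₂ → Prop} :
    IsSB T₁ T₂ B ↔
      B T₁.init T₂.init ∧ T₁.IsSplittingSim T₂ B ∧ T₂.IsSplittingSim T₁ (flip B) := by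
  simp only [IsSB, IsSplittingSim, flip, exists_le_sSup_image_fst_iff,
    exists_le_sSup_forall_mem_iff]
  constructor
  · rintro ⟨hinit, h⟩
    exact ⟨hinit, fun s₁ s₂ hB => ⟨(h s₁ s₂ hB).1, (h s₁ s₂ hB).2.2.1⟩,
      fun s₂ s₁ hB => ⟨(h s₁ s₂ hB).2.1, (h s₁ s₂ hB).2.2.2⟩⟩
  · rintro ⟨hinit, h₁₂, h₂₁⟩
    exact ⟨hinit, fun s₁ s₂ hB =>
      ⟨(h₁₂ s₁ s₂ hB).1, (h₂₁ s₂ s₁ hB).1, (h₁₂ s₁ s₂ hB).2, (h₂₁ s₂ s₁ hB).2⟩⟩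

theorem isSplittingSim_eq (T : CTS C Act S₁) : T.IsSplittingSim T Eq := by
  rintro s _ rfl
  exact ⟨fun α a s' h => le_sSup ⟨s', h, rfl⟩, fun α h => le_sSup h⟩

theorem IsSplittingSim.comp {T₁ : CTS C Act S₁} {T₂ : CTS C Act S₂} {T₃ : CTS C Act S₃}
    {B₁ : S₁ → S₂ → Prop} {B₂ : S₂ → S₃ → Prop}
    (h₁ : T₁.IsSplittingSim T₂ B₁) (h₂ : T₂.IsSplittingSim T₃ B₂) :
    T₁.IsSplittingSim T₃ (Relation.Comp B₁ B₂) := by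
  rintro s₁ s₃ ⟨s₂, hB₁, hB₂⟩
  refine ⟨fun α a s₁' htr => (h₁ s₁ s₂ hB₁).1 α a s₁' htr |>.trans (sSup_le ?_),
    fun α hterm => (h₁ s₁ s₂ hB₁).2 α hterm |>.trans (sSup_le fun β hβ => ?_)⟩
  · rintro β ⟨s₂', htr₂, hB₁'⟩
    refine ((h₂ s₂ s₃ hB₂).1 β a s₂' htr₂).trans (sSup_le_sSup ?_)
    rintro γ ⟨s₃', htr₃, hB₂'⟩
    exact ⟨s₃', htr₃, s₂', hB₁', hB₂'⟩
  · exact (h₂ s₂ s₃ hB₂).2 β hβ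

theorem isSB_eq (T : CTS C Act S₁) : IsSB T T Eq := by
  have hflip : flip (@Eq S₁) = Eq := flip_eq_iff.2 inferInstance
  exact isSB_iff.2 ⟨rfl, T.isSplittingSim_eq, hflip ▸ T.isSplittingSim_eq⟩

end CTS

namespace IsSB

variable {C Act S₁ S₂ S₃ : Type*} [CompleteBooleanAlgebra C]

theorem symm {T₁ : CTS C Act S₁} {T₂ : CTS C Act S₂} {B : S₁ → S₂ → Prop}
    (h : IsSB T₁ T₂ B) : IsSB T₂ T₁ (flip B) :=
  let ⟨hinit, h₁₂, h₂₁⟩ := CTS.isSB_iff.1 h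
  CTS.isSB_iff.2 ⟨hinit, h₂₁, h₁₂⟩

theorem comp {T₁ : CTS C Act S₁} {T₂ : CTS C Act S₂} {T₃ : CTS C Act S₃}
    {B₁ : S₁ → S₂ → Prop} {B₂ : S₂ → S₃ → Prop}
    (h₁ : IsSB T₁ T₂ B₁) (h₂ : IsSB T₂ T₃ B₂) : IsSB T₁ T₃ (Relation.Comp B₁ B₂) := by
  obtain ⟨hinit₁, h₁₂, h₂₁⟩ := CTS.isSB_iff.1 h₁
  obtain ⟨hinit₂, h₂₃, h₃₂⟩ := CTS.isSB_iff.1 h₂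
  refine CTS.isSB_iff.2 ⟨⟨_, hinit₁, hinit₂⟩, h₁₂.comp h₂₃, ?_⟩
  rw [Relation.flip_comp]
  exact h₃₂.comp h₂₁

end IsSB

/-- Splitting bisimilarity is an equivalence relation on conditional
transition systems: reflexive, symmetric and transitive. -/
theorem sbisim_equivalence (C Act S : Type*) [CompleteBooleanAlgebra C] :
    Equivalence (fun T₁ T₂ : CTS C Act S => SBisim T₁ T₂) :=
  ⟨fun T => ⟨Eq, T.isSB_eq⟩, fun ⟨_, h⟩ => ⟨_, h.symm⟩, fun ⟨_, h₁⟩ ⟨_, h₂⟩ => ⟨_, h₁.comp h₂⟩⟩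
end

section
/- Splitting bisimilarity is a congruence with respect to alternative composition of conditional transition systems: if T₁ is splitting bisimilar to T₁' and T₂ is splitting bisimilar to T₂', then T₁ + T₂ is splitting bisimilar to T₁' + T₂'. -/
/-- Reachability: `Reach T s s'` iff `s'` is reachable from `s` by a sequence
of transitions. -/
def Reach {C Act S : Type*} (T : CTS C Act S) : S → S → Prop :=
  Relation.ReflTransGen (fun s s' => ∃ α a, T.tr α a s s')

/-- The connected part of a conditional transition system: its states are the
states reachable from the initial state, with transition and termination
relations restricted accordingly. -/
def conn {C Act S : Type*} (T : CTS C Act S) :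
    CTS C Act {s : S // Reach T T.init s} where
  tr α a s s' := T.tr α a s.val s'.val
  term α s := T.term α s.val
  init := ⟨T.init, Relation.ReflTransGen.refl⟩

/-- Alternative composition of conditional transition systems (before taking
the connected part): a fresh initial state whose outgoing transitions and
terminations mirror those of the two initial states, with the two systems
placed side by side. -/
def altComp {C Act S₁ S₂ : Type*} (T₁ : CTS C Act S₁) (T₂ : CTS C Act S₂) :
    CTS C Act (Option (S₁ ⊕ S₂)) where
  tr α a s s' :=
    match s, s' with
    | none, some (Sum.inl t') => T₁.tr α a T₁.init t'
    | none, some (Sum.inr t') => T₂.tr α a T₂.init t'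
    | some (Sum.inl t), some (Sum.inl t') => T₁.tr α a t t'
    | some (Sum.inr t), some (Sum.inr t') => T₂.tr α a t t'
    | _, _ => False
  term α s :=
    match s with
    | none => T₁.term α T₁.init ∨ T₂.term α T₂.init
    | some (Sum.inl t) => T₁.term α t
    | some (Sum.inr t) => T₂.term α t
  init := none

/-! A splitting bisimulation is a pair of splitting simulations, one in each direction, so
it suffices to transport simulations. Simulations between the components combine into one
between the alternative compositions that relates the fresh initial states, which move and
terminate as the component initial states do, and is componentwise elsewhere. Restricting to
the connected parts preserves a simulation, since matching transitions out of a reachable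
state lead to reachable states. -/

section SplittingSimulation

variable {C Act : Type*} [CompleteBooleanAlgebra C]

/-- How a transition with condition `α` is matched in a splitting bisimulation. -/
def Covered {X : Type*} (α : C) (P : C → X → Prop) : Prop :=
  ∃ CS : Set (C × X), α ≤ sSup (Prod.fst '' CS) ∧ ∀ p ∈ CS, P p.1 p.2

theorem Covered.map {X Y : Type*} {α : C} {P : C → X → Prop} {Q : C → Y → Prop}
    (f : X → Y) (h : Covered α P) (hPQ : ∀ c x, P c x → Q c (f x)) : Covered α Q := by
  obtain ⟨CS, hle, hCS⟩ := h
  refine ⟨(fun p => (p.1, f p.2)) '' CS, by rwa [Set.image_image], ?_⟩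
  rintro _ ⟨p, hp, rfl⟩
  exact hPQ p.1 p.2 (hCS p hp)

theorem Covered.restrict {X : Type*} {α : C} {P : C → X → Prop} {p : X → Prop}
    (h : Covered α P) (hp : ∀ c x, P c x → p x) :
    Covered α fun c (y : Subtype p) => P c y := by
  obtain ⟨CS, hle, hCS⟩ := h
  refine ⟨{q | (q.1, q.2.val) ∈ CS}, hle.trans (sSup_le_sSup ?_), fun q hq => hCS _ hq⟩
  rintro _ ⟨q, hq, rfl⟩
  exact ⟨(q.1, ⟨q.2, hp _ _ (hCS q hq)⟩), hq, rfl⟩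

structure IsSplittingSim {S₁ S₂ : Type*} (T₁ : CTS C Act S₁) (T₂ : CTS C Act S₂)
    (B : S₁ → S₂ → Prop) : Prop where
  init : B T₁.init T₂.init
  tr : ∀ ⦃s₁ s₂⦄, B s₁ s₂ → ∀ α a s₁', T₁.tr α a s₁ s₁' →
    Covered α fun c s₂' => T₂.tr c a s₂ s₂' ∧ B s₁' s₂'
  term : ∀ ⦃s₁ s₂⦄, B s₁ s₂ → ∀ α, T₁.term α s₁ →
    ∃ Cs : Set C, α ≤ sSup Cs ∧ ∀ α' ∈ Cs, T₂.term α' s₂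

theorem isSB_iff {S₁ S₂ : Type*} {T₁ : CTS C Act S₁} {T₂ : CTS C Act S₂}
    {B : S₁ → S₂ → Prop} :
    IsSB T₁ T₂ B ↔ IsSplittingSim T₁ T₂ B ∧ IsSplittingSim T₂ T₁ (flip B) := by
  constructor
  · rintro ⟨hinit, h⟩
    exact ⟨⟨hinit, fun s₁ s₂ hB => (h s₁ s₂ hB).1, fun s₁ s₂ hB => (h s₁ s₂ hB).2.2.1⟩,
      ⟨hinit, fun s₂ s₁ hB => (h s₁ s₂ hB).2.1, fun s₂ s₁ hB => (h s₁ s₂ hB).2.2.2⟩⟩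
  · rintro ⟨h, h'⟩
    exact ⟨h.init, fun s₁ s₂ hB => ⟨h.tr hB, h'.tr hB, h.term hB, h'.term hB⟩⟩

theorem IsSplittingSim.conn {S S' : Type*} {T : CTS C Act S} {T' : CTS C Act S'}
    {B : S → S' → Prop} (h : IsSplittingSim T T' B) :
    IsSplittingSim (conn T) (conn T') fun s s' => B s s' where
  init := h.init
  tr _ s₂ hB α a s₁' htr :=
    (h.tr hB α a s₁' htr).restrict fun c _ hc => s₂.2.tail ⟨c, a, hc.1⟩
  term _ _ hB := h.term hB

def altRel {S₁ S₂ S₁' S₂' : Type*} (B₁ : S₁ → S₁' → Prop) (B₂ : S₂ → S₂' → Prop) :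
    Option (S₁ ⊕ S₂) → Option (S₁' ⊕ S₂') → Prop
  | none, none => True
  | some (.inl t), some (.inl t') => B₁ t t'
  | some (.inr t), some (.inr t') => B₂ t t'
  | _, _ => False

theorem flip_altRel {S₁ S₂ S₁' S₂' : Type*} (B₁ : S₁ → S₁' → Prop) (B₂ : S₂ → S₂' → Prop) :
    flip (altRel B₁ B₂) = altRel (flip B₁) (flip B₂) := by
  funext x y
  rcases x with _ | _ | _ <;> rcases y with _ | _ | _ <;> rfl

theorem IsSplittingSim.altComp {S₁ S₂ S₁' S₂' : Type*}
    {T₁ : CTS C Act S₁} {T₂ : CTS C Act S₂} {T₁' : CTS C Act S₁'} {T₂' : CTS C Act S₂'}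
    {B₁ : S₁ → S₁' → Prop} {B₂ : S₂ → S₂' → Prop}
    (h₁ : IsSplittingSim T₁ T₁' B₁) (h₂ : IsSplittingSim T₂ T₂' B₂) :
    IsSplittingSim (altComp T₁ T₂) (altComp T₁' T₂') (altRel B₁ B₂) where
  init := trivial
  tr := by
    rintro (_ | t₁ | t₁) (_ | t₂ | t₂) hB α a (_ | s | s) htr <;> try exact hB.elim
    all_goals try exact htr.elim
    · exact (h₁.tr h₁.init α a s htr).map (some ∘ .inl) fun _ _ => id
    · exact (h₂.tr h₂.init α a s htr).map (some ∘ .inr) fun _ _ => id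
    · exact (h₁.tr hB α a s htr).map (some ∘ .inl) fun _ _ => id
    · exact (h₂.tr hB α a s htr).map (some ∘ .inr) fun _ _ => id
  term := by
    rintro (_ | t₁ | t₁) (_ | t₂ | t₂) hB α hterm <;> try exact hB.elim
    · rcases hterm with hterm | hterm
      · obtain ⟨Cs, hle, hCs⟩ := h₁.term h₁.init α hterm
        exact ⟨Cs, hle, fun c hc => Or.inl (hCs c hc)⟩
      · obtain ⟨Cs, hle, hCs⟩ := h₂.term h₂.init α hterm
        exact ⟨Cs, hle, fun c hc => Or.inr (hCs c hc)⟩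
    · exact h₁.term hB α hterm
    · exact h₂.term hB α hterm

end SplittingSimulation

/-- Splitting bisimilarity is a congruence with respect to alternative
composition: if `T₁ ≈ T₁'` and `T₂ ≈ T₂'` then `T₁ + T₂ ≈ T₁' + T₂'`. -/
theorem sbisim_congr_altComp {C Act S₁ S₂ S₁' S₂' : Type*}
    [CompleteBooleanAlgebra C]
    (T₁ : CTS C Act S₁) (T₂ : CTS C Act S₂)
    (T₁' : CTS C Act S₁') (T₂' : CTS C Act S₂')
    (h₁ : SBisim T₁ T₁') (h₂ : SBisim T₂ T₂') :
    SBisim (conn (altComp T₁ T₂)) (conn (altComp T₁' T₂')) := by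
  obtain ⟨B₁, hB₁⟩ := h₁
  obtain ⟨B₂, hB₂⟩ := h₂
  obtain ⟨hfwd₁, hbwd₁⟩ := isSB_iff.1 hB₁
  obtain ⟨hfwd₂, hbwd₂⟩ := isSB_iff.1 hB₂
  have hbwd := (hbwd₁.altComp hbwd₂).conn
  rw [← flip_altRel] at hbwd
  exact ⟨_, isSB_iff.2 ⟨(hfwd₁.altComp hfwd₂).conn, hbwd⟩⟩
end

section
/- Splitting bisimilarity is a congruence with respect to encapsulation: if T ≈ T', then ∂_H(T) ≈ ∂_H(T') for every set of actions H. -/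
/-- Encapsulation `∂_H(T)` (before taking the connected part): all transitions
labelled with an action in `H` are removed; termination is unchanged. -/
def encap {C Act S : Type*} (H : Set Act) (T : CTS C Act S) :
    CTS C Act S where
  tr α a s s' := a ∉ H ∧ T.tr α a s s'
  term := T.term
  init := T.init

section

variable {C Act S₁ S₂ : Type*} [CompleteBooleanAlgebra C]

theorem exists_transfer_encap {T : CTS C Act S₂} {H : Set Act} {α : C} {a : Act} {s : S₂}
    {P : S₂ → Prop} (haH : a ∉ H)
    (h : ∃ CS : Set (C × S₂), α ≤ sSup (Prod.fst '' CS) ∧ ∀ p ∈ CS, T.tr p.1 a s p.2 ∧ P p.2) :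
    ∃ CS : Set (C × S₂),
      α ≤ sSup (Prod.fst '' CS) ∧ ∀ p ∈ CS, (encap H T).tr p.1 a s p.2 ∧ P p.2 :=
  h.imp fun _ ⟨hle, hCS⟩ => ⟨hle, fun p hp => ⟨⟨haH, (hCS p hp).1⟩, (hCS p hp).2⟩⟩

theorem IsSB.encap {T₁ : CTS C Act S₁} {T₂ : CTS C Act S₂} {B : S₁ → S₂ → Prop}
    (hB : IsSB T₁ T₂ B) (H : Set Act) : IsSB (encap H T₁) (encap H T₂) B := by
  refine ⟨hB.1, fun s₁ s₂ hs => ?_⟩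
  obtain ⟨fwd, bwd, term₁, term₂⟩ := hB.2 s₁ s₂ hs
  exact ⟨fun α a s₁' ⟨haH, htr⟩ => exists_transfer_encap haH (fwd α a s₁' htr),
    fun α a s₂' ⟨haH, htr⟩ => exists_transfer_encap (P := (B · s₂')) haH (bwd α a s₂' htr),
    term₁, term₂⟩

theorem exists_transfer_conn {T : CTS C Act S₂} {α : C} {a : Act}
    {s : {s // Reach T T.init s}} {P : S₂ → Prop}
    (h : ∃ CS : Set (C × S₂), α ≤ sSup (Prod.fst '' CS) ∧ ∀ p ∈ CS, T.tr p.1 a s.val p.2 ∧ P p.2) :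
    ∃ CS : Set (C × {s // Reach T T.init s}),
      α ≤ sSup (Prod.fst '' CS) ∧ ∀ p ∈ CS, (conn T).tr p.1 a s p.2 ∧ P p.2.val := by
  obtain ⟨CS, hle, hCS⟩ := h
  refine ⟨{q | (q.1, q.2.val) ∈ CS}, hle.trans (sSup_le_sSup ?_), fun q hq => hCS _ hq⟩
  rintro c ⟨p, hp, rfl⟩
  exact ⟨(p.1, ⟨p.2, s.2.tail ⟨p.1, a, (hCS p hp).1⟩⟩), hp, rfl⟩

theorem IsSB.conn {T₁ : CTS C Act S₁} {T₂ : CTS C Act S₂} {B : S₁ → S₂ → Prop}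
    (hB : IsSB T₁ T₂ B) : IsSB (conn T₁) (conn T₂) (fun s₁ s₂ => B s₁.val s₂.val) := by
  refine ⟨hB.1, fun s₁ s₂ hs => ?_⟩
  obtain ⟨fwd, bwd, term₁, term₂⟩ := hB.2 s₁.val s₂.val hs
  exact ⟨fun α a s₁' htr => exists_transfer_conn (fwd α a s₁'.val htr),
    fun α a s₂' htr => exists_transfer_conn (P := (B · s₂'.val)) (bwd α a s₂'.val htr),
    term₁, term₂⟩

end

/-- Splitting bisimilarity is a congruence with respect to encapsulation:
if `T ≈ T'` then `∂_H(T) ≈ ∂_H(T')` for every set of actions `H`. -/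
theorem sbisim_congr_encap {C Act S S' : Type*} [CompleteBooleanAlgebra C]
    (T : CTS C Act S) (T' : CTS C Act S') (h : SBisim T T') (H : Set Act) :
    SBisim (conn (encap H T)) (conn (encap H T')) := by
  obtain ⟨B, hB⟩ := h
  exact ⟨_, (hB.encap H).conn⟩
end

section
/- From the axioms of ACPε_cr (including R6: a·((↼φ) :→ x) = φ :→ a·x + ¬φ :→ a·δ, and GC1–GC7, A1–A9), the generalized retrospection law R6' is derivable: a·(x ⊲ ↼φ ⊳ y) = (a·x) ⊲ φ ⊳ (a·y). -/
/-- A model of the equational theory ACPε_c restricted to the constants and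
operators of BPA with the empty process, guarded commands, and conditions
forming a Boolean algebra, together with the axioms A1–A9, GC1–GC7 and
BA1–BA8. By Birkhoff's completeness theorem, an equation is derivable from
these axioms iff it holds in every such model. -/
structure ACPecAlg (P : Type*) (C : Type*) where
  add : P → P → P
  seq : P → P → P
  gc : C → P → P
  dead : P
  eps : P
  bot : C
  top : C
  compl : C → C
  join : C → C → C
  meet : C → C → C
  A1 : ∀ x y, add x y = add y x
  A2 : ∀ x y z, add (add x y) z = add x (add y z)
  A3 : ∀ x, add x x = x
  A4 : ∀ x y z, seq (add x y) z = add (seq x z) (seq y z)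
  A5 : ∀ x y z, seq (seq x y) z = seq x (seq y z)
  A6 : ∀ x, add x dead = x
  A7 : ∀ x, seq dead x = dead
  A8 : ∀ x, seq x eps = x
  A9 : ∀ x, seq eps x = x
  GC1 : ∀ x, gc top x = x
  GC2 : ∀ x, gc bot x = dead
  GC3 : ∀ φ, gc φ dead = dead
  GC4 : ∀ φ x y, gc φ (add x y) = add (gc φ x) (gc φ y)
  GC5 : ∀ φ x y, gc φ (seq x y) = seq (gc φ x) y
  GC6 : ∀ φ ψ x, gc φ (gc ψ x) = gc (meet φ ψ) x
  GC7 : ∀ φ ψ x, gc (join φ ψ) x = add (gc φ x) (gc ψ x)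
  BA1 : ∀ φ, join φ bot = φ
  BA2 : ∀ φ, join φ (compl φ) = top
  BA3 : ∀ φ ψ, join φ ψ = join ψ φ
  BA4 : ∀ φ ψ χ, join φ (meet ψ χ) = meet (join φ ψ) (join φ χ)
  BA5 : ∀ φ, meet φ top = φ
  BA6 : ∀ φ, meet φ (compl φ) = bot
  BA7 : ∀ φ ψ, meet φ ψ = meet ψ φ
  BA8 : ∀ φ ψ χ, meet φ (join ψ χ) = join (meet φ ψ) (meet φ χ)

/-- The conditional `p ⊲ φ ⊳ q`, an abbreviation for `φ :→ p + ¬φ :→ q`. -/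
def ACPecAlg.cond {P C : Type*} (A : ACPecAlg P C) (p : P) (φ : C) (q : P) : P :=
  A.add (A.gc φ p) (A.gc (A.compl φ) q)

/-- A model of ACPε_cr: a model of ACPε_c together with a retrospection
operator on conditions satisfying R1–R5. -/
structure ACPecrAlg (P : Type*) (C : Type*) extends ACPecAlg P C where
  retro : C → C
  R1 : retro bot = bot
  R2 : retro top = top
  R3 : ∀ φ, retro (compl φ) = compl (retro φ)
  R4 : ∀ φ ψ, retro (join φ ψ) = join (retro φ) (retro ψ)
  R5 : ∀ φ ψ, retro (meet φ ψ) = meet (retro φ) (retro ψ)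

/-! A process is determined by its two restrictions `φ :→ ·` and `¬φ :→ ·`, and a conditional
`p ⊲ φ ⊳ q` restricts to `p` and `q`. By R6, `φ :→ a·u` only depends on `↼φ :→ u`; applied to
`φ` and to `¬φ` (using `↼¬φ = ¬↼φ`), this identifies the two restrictions of both sides of R6'. -/

namespace ACPecAlg

variable {P C : Type*} (A : ACPecAlg P C)

lemma meet_self (φ : C) : A.meet φ φ = φ := by
  rw [← A.BA1 (A.meet φ φ), ← A.BA6 φ, ← A.BA8, A.BA2, A.BA5]

lemma gc_cond (φ : C) (p q : P) : A.gc φ (A.cond p φ q) = A.gc φ p := by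
  rw [ACPecAlg.cond, A.GC4, A.GC6, A.GC6, meet_self, A.BA6, A.GC2, A.A6]

lemma gc_compl_cond (φ : C) (p q : P) :
    A.gc (A.compl φ) (A.cond p φ q) = A.gc (A.compl φ) q := by
  rw [ACPecAlg.cond, A.GC4, A.GC6, A.GC6, meet_self, A.BA7, A.BA6, A.GC2, A.A1, A.A6]

lemma cond_self (φ : C) (p : P) : A.cond p φ p = p := by
  rw [ACPecAlg.cond, ← A.GC7, A.BA2, A.GC1]

lemma eq_of_gc_eq_of_gc_compl_eq {φ : C} {p q : P} (h : A.gc φ p = A.gc φ q)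
    (hc : A.gc (A.compl φ) p = A.gc (A.compl φ) q) : p = q := by
  rw [← A.cond_self φ p, ← A.cond_self φ q, ACPecAlg.cond, ACPecAlg.cond, h, hc]

end ACPecAlg

namespace ACPecrAlg

variable {P C : Type*} (A : ACPecrAlg P C)

lemma gc_seq_eq_of_gc_retro_eq {a : P} {φ : C}
    (R6 : ∀ x, A.seq a (A.gc (A.retro φ) x) = A.cond (A.seq a x) φ (A.seq a A.dead))
    {u v : P} (h : A.gc (A.retro φ) u = A.gc (A.retro φ) v) :
    A.gc φ (A.seq a u) = A.gc φ (A.seq a v) := by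
  rw [← A.gc_cond φ (A.seq a u), ← R6, h, R6, A.gc_cond]

end ACPecrAlg

/-- From the axioms of ACPε_cr — in particular axiom R6
`a·((↼φ) :→ x) = φ :→ a·x + ¬φ :→ a·δ`, which holds for every constant
`a ∈ Act ∪ {δ}` — the generalized retrospection law R6' is derivable:
`a·(x ⊲ ↼φ ⊳ y) = (a·x) ⊲ φ ⊳ (a·y)`. -/
theorem acpecr_R6' {P C : Type*} (A : ACPecrAlg P C) (a : P)
    (R6 : ∀ φ x, A.seq a (A.gc (A.retro φ) x) =
      A.add (A.gc φ (A.seq a x)) (A.gc (A.compl φ) (A.seq a A.dead)))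
    (φ : C) (x y : P) :
    A.seq a (A.cond x (A.retro φ) y) =
      A.cond (A.seq a x) φ (A.seq a y) := by
  apply A.eq_of_gc_eq_of_gc_compl_eq (φ := φ)
  · rw [A.gc_cond]
    exact A.gc_seq_eq_of_gc_retro_eq (R6 φ) (A.gc_cond _ x y)
  · rw [A.gc_compl_cond]
    refine A.gc_seq_eq_of_gc_retro_eq (R6 (A.compl φ)) ?_
    rw [A.R3]
    exact A.gc_compl_cond _ x y
end

section
/- Signal-observing splitting bisimilarity is an equivalence relation on conditional transition systems with signals. -/
/-- A conditional transition system with signals: each state emits a signal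
(a condition), no transition starts or ends in a state with signal `⊥`, and no
state with signal `⊥` terminates. -/
structure SCTS (C : Type*) [CompleteBooleanAlgebra C] (Act : Type*)
    (S : Type*) extends CTS C Act S where
  sg : S → C
  tr_src : ∀ α a s s', tr α a s s' → sg s ≠ ⊥
  tr_tgt : ∀ α a s s', tr α a s s' → sg s' ≠ ⊥
  term_sg : ∀ α s, term α s → sg s ≠ ⊥

/-- `B` is a signal-observing splitting bisimulation between `T₁` and `T₂`. -/
def IsSOSB {C Act S₁ S₂ : Type*} [CompleteBooleanAlgebra C]
    (T₁ : SCTS C Act S₁) (T₂ : SCTS C Act S₂) (B : S₁ → S₂ → Prop) : Prop :=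
  B T₁.init T₂.init ∧
  ∀ s₁ s₂, B s₁ s₂ →
    T₁.sg s₁ = T₂.sg s₂ ∧
    (∀ α a s₁', T₁.tr α a s₁ s₁' → ∃ CS : Set (C × S₂),
      T₁.sg s₁ ⊓ α ≤ sSup (Prod.fst '' CS) ∧
      ∀ p ∈ CS, T₂.tr p.1 a s₂ p.2 ∧ B s₁' p.2) ∧
    (∀ α a s₂', T₂.tr α a s₂ s₂' → ∃ CS : Set (C × S₁),
      T₂.sg s₂ ⊓ α ≤ sSup (Prod.fst '' CS) ∧
      ∀ p ∈ CS, T₁.tr p.1 a s₁ p.2 ∧ B p.2 s₂') ∧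
    (∀ α, T₁.term α s₁ → ∃ Cs : Set C,
      T₁.sg s₁ ⊓ α ≤ sSup Cs ∧ ∀ α' ∈ Cs, T₂.term α' s₂) ∧
    (∀ α, T₂.term α s₂ → ∃ Cs : Set C,
      T₂.sg s₂ ⊓ α ≤ sSup Cs ∧ ∀ α' ∈ Cs, T₁.term α' s₁)

/-- Two conditional transition systems with signals are signal-observing
splitting bisimilar if such a bisimulation exists. -/
def SOBisim {C Act S₁ S₂ : Type*} [CompleteBooleanAlgebra C]
    (T₁ : SCTS C Act S₁) (T₂ : SCTS C Act S₂) : Prop :=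
  ∃ B, IsSOSB T₁ T₂ B

/-!
A signal-observing splitting bisimulation is a pair of one-directional simulations,
so everything reduces to composing simulations. There a transition of `T₁` is covered,
under the signal `σ`, by transitions of `T₂` with conditions `β`; since the signals
agree, each of these is covered under `σ` by transitions of `T₃`, and
`σ ⊓ sSup A = ⨆ β ∈ A, σ ⊓ β` turns this into a cover of the original transition.
-/

section Cover

variable {C : Type*}

theorem exists_set_le_sSup_iff [CompleteLattice C] {a : C} {P : C → Prop} :
    (∃ Cs : Set C, a ≤ sSup Cs ∧ ∀ c ∈ Cs, P c) ↔ a ≤ sSup {c | P c} :=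
  ⟨fun ⟨_, ha, hP⟩ => ha.trans (sSup_le_sSup hP), fun ha => ⟨_, ha, fun _ => id⟩⟩

theorem exists_set_prod_le_sSup_fst_iff [CompleteLattice C] {β : Type*} {a : C}
    {P : C × β → Prop} :
    (∃ CS : Set (C × β), a ≤ sSup (Prod.fst '' CS) ∧ ∀ p ∈ CS, P p) ↔
      a ≤ sSup {c | ∃ x, P (c, x)} := by
  constructor
  · rintro ⟨CS, ha, hP⟩
    refine ha.trans (sSup_le_sSup ?_)
    rintro _ ⟨p, hp, rfl⟩
    exact ⟨p.2, hP p hp⟩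
  · intro ha
    refine ⟨{p | P p}, ha.trans (sSup_le_sSup ?_), fun _ => id⟩
    rintro c ⟨x, hx⟩
    exact ⟨(c, x), hx, rfl⟩

theorem inf_le_sSup_trans [Order.Frame C] {σ α : C} {s t : Set C}
    (hs : σ ⊓ α ≤ sSup s) (ht : ∀ β ∈ s, σ ⊓ β ≤ sSup t) : σ ⊓ α ≤ sSup t :=
  calc σ ⊓ α ≤ σ ⊓ sSup s := le_inf inf_le_left hs
    _ = ⨆ β ∈ s, σ ⊓ β := inf_sSup_eq
    _ ≤ sSup t := iSup₂_le ht

end Cover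

section Simulation

variable {C Act S₁ S₂ S₃ : Type*} [CompleteBooleanAlgebra C]

/-- The covering sets of `IsSOSB` are replaced by the set of all matching conditions,
which covers if any covering set does (`exists_set_le_sSup_iff`). -/
def IsSOSim (T₁ : SCTS C Act S₁) (T₂ : SCTS C Act S₂) (B : S₁ → S₂ → Prop) : Prop :=
  ∀ s₁ s₂, B s₁ s₂ →
    T₁.sg s₁ = T₂.sg s₂ ∧
    (∀ α a s₁', T₁.tr α a s₁ s₁' →
      T₁.sg s₁ ⊓ α ≤ sSup {β | ∃ s₂', T₂.tr β a s₂ s₂' ∧ B s₁' s₂'}) ∧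
    (∀ α, T₁.term α s₁ → T₁.sg s₁ ⊓ α ≤ sSup {β | T₂.term β s₂})

theorem isSOSB_iff {T₁ : SCTS C Act S₁} {T₂ : SCTS C Act S₂} {B : S₁ → S₂ → Prop} :
    IsSOSB T₁ T₂ B ↔ B T₁.init T₂.init ∧ IsSOSim T₁ T₂ B ∧ IsSOSim T₂ T₁ (flip B) := by
  simp only [IsSOSB, IsSOSim, flip, exists_set_prod_le_sSup_fst_iff, exists_set_le_sSup_iff]
  refine and_congr_right fun _ => ⟨fun h => ⟨?_, ?_⟩, fun ⟨hf, hb⟩ => ?_⟩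
  · intro s₁ s₂ hB
    obtain ⟨hsg, htr, -, hterm, -⟩ := h s₁ s₂ hB
    exact ⟨hsg, htr, hterm⟩
  · intro s₂ s₁ hB
    obtain ⟨hsg, -, htr, -, hterm⟩ := h s₁ s₂ hB
    exact ⟨hsg.symm, htr, hterm⟩
  · intro s₁ s₂ hB
    obtain ⟨hsg, htr₁, hterm₁⟩ := hf s₁ s₂ hB
    obtain ⟨-, htr₂, hterm₂⟩ := hb s₂ s₁ hB
    exact ⟨hsg, htr₁, htr₂, hterm₁, hterm₂⟩

theorem IsSOSim.refl (T : SCTS C Act S₁) : IsSOSim T T Eq := by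
  rintro s _ rfl
  refine ⟨rfl, fun α a s' h => ?_, fun α h => ?_⟩
  · exact inf_le_right.trans (le_sSup ⟨s', h, rfl⟩)
  · exact inf_le_right.trans (le_sSup h)

theorem IsSOSim.comp {T₁ : SCTS C Act S₁} {T₂ : SCTS C Act S₂} {T₃ : SCTS C Act S₃}
    {B : S₁ → S₂ → Prop} {B' : S₂ → S₃ → Prop} (h : IsSOSim T₁ T₂ B)
    (h' : IsSOSim T₂ T₃ B') : IsSOSim T₁ T₃ (Relation.Comp B B') := by
  rintro s₁ s₃ ⟨s₂, hB, hB'⟩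
  obtain ⟨hsg, htr, hterm⟩ := h s₁ s₂ hB
  obtain ⟨hsg', htr', hterm'⟩ := h' s₂ s₃ hB'
  refine ⟨hsg.trans hsg', fun α a s₁' hα => ?_, fun α hα => ?_⟩
  · refine inf_le_sSup_trans (htr α a s₁' hα) ?_
    rintro β ⟨s₂', hβ, hB₁⟩
    rw [hsg]
    refine (htr' β a s₂' hβ).trans (sSup_le_sSup ?_)
    rintro γ ⟨s₃', hγ, hB₂⟩
    exact ⟨s₃', hγ, s₂', hB₁, hB₂⟩
  · exact inf_le_sSup_trans (hterm α hα) fun β hβ => hsg ▸ hterm' β hβ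

theorem isSOSB_eq (T : SCTS C Act S₁) : IsSOSB T T Eq :=
  isSOSB_iff.2 ⟨rfl, .refl T, Std.Symm.flip_eq (r := Eq) ▸ .refl T⟩

theorem IsSOSB.symm {T₁ : SCTS C Act S₁} {T₂ : SCTS C Act S₂} {B : S₁ → S₂ → Prop}
    (h : IsSOSB T₁ T₂ B) : IsSOSB T₂ T₁ (flip B) :=
  let ⟨hinit, hf, hb⟩ := isSOSB_iff.1 h
  isSOSB_iff.2 ⟨hinit, hb, hf⟩

theorem IsSOSB.comp {T₁ : SCTS C Act S₁} {T₂ : SCTS C Act S₂} {T₃ : SCTS C Act S₃}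
    {B : S₁ → S₂ → Prop} {B' : S₂ → S₃ → Prop} (h : IsSOSB T₁ T₂ B)
    (h' : IsSOSB T₂ T₃ B') : IsSOSB T₁ T₃ (Relation.Comp B B') := by
  obtain ⟨hinit, hf, hb⟩ := isSOSB_iff.1 h
  obtain ⟨hinit', hf', hb'⟩ := isSOSB_iff.1 h'
  refine isSOSB_iff.2 ⟨⟨T₂.init, hinit, hinit'⟩, hf.comp hf', ?_⟩
  rw [Relation.flip_comp]
  exact hb'.comp hb

end Simulation

/-- Signal-observing splitting bisimilarity is an equivalence relation on
conditional transition systems with signals. -/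
theorem sobisim_equivalence (C Act S : Type*) [CompleteBooleanAlgebra C] :
    Equivalence (fun T₁ T₂ : SCTS C Act S => SOBisim T₁ T₂) := by
  refine ⟨fun T => ?_, fun ⟨B, hB⟩ => ?_, fun ⟨B, hB⟩ ⟨B', hB'⟩ => ?_⟩
  · exact ⟨Eq, isSOSB_eq T⟩
  · exact ⟨flip B, hB.symm⟩
  · exact ⟨Relation.Comp B B', hB.comp hB'⟩
end

section
/- For the unfolding of a conditional transition system: the unfolding unf(T) of T is a conditional transition system isomorphic in behaviour to T, i.e., T and unf(T) are splitting bisimilar, with the relation relating each path to the state it ends in being a witnessing splitting bisimulation. -/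
/-- `IsPath T l s` holds iff the alternating sequence consisting of the
state–label pairs in `l` followed by the final state `s` is a path of `T`:
it starts in the initial state and consecutive states are connected by
transitions with the recorded labels. -/
inductive IsPath {C Act S : Type*} (T : CTS C Act S) :
    List (S × C × Act) → S → Prop
  | nil : IsPath T [] T.init
  | snoc {l : List (S × C × Act)} {s s' : S} {α : C} {a : Act} :
      IsPath T l s → T.tr α a s s' → IsPath T (l ++ [(s, α, a)]) s'

/-- The unfolding `unf T` of `T`: its states are the paths of `T`, its initial
state is the path `⟨s⁰⟩`, a path `π⌢⟨s⟩` has a transition labelled `(α, a)` to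
`π⌢⟨s,(α,a),s'⟩` whenever `s →^{α,a} s'` in `T`, and `π⌢⟨s⟩` terminates under
`α` whenever `s ↓^α` in `T`. -/
def unf {C Act S : Type*} (T : CTS C Act S) :
    CTS C Act {p : List (S × C × Act) × S // IsPath T p.1 p.2} where
  tr α a p q :=
    q.val.1 = p.val.1 ++ [(p.val.2, α, a)] ∧ T.tr α a p.val.2 q.val.2
  term α p := T.term α p.val.2
  init := ⟨([], T.init), IsPath.nil⟩

def IsCondBisim {C Act S₁ S₂ : Type*} (T₁ : CTS C Act S₁) (T₂ : CTS C Act S₂)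
    (B : S₁ → S₂ → Prop) : Prop :=
  B T₁.init T₂.init ∧
  ∀ s₁ s₂, B s₁ s₂ →
    (∀ α a s₁', T₁.tr α a s₁ s₁' → ∃ s₂', T₂.tr α a s₂ s₂' ∧ B s₁' s₂') ∧
    (∀ α a s₂', T₂.tr α a s₂ s₂' → ∃ s₁', T₁.tr α a s₁ s₁' ∧ B s₁' s₂') ∧
    (∀ α, T₁.term α s₁ → T₂.term α s₂) ∧
    (∀ α, T₂.term α s₂ → T₁.term α s₁)

section

variable {C Act S₁ S₂ : Type*} {T₁ : CTS C Act S₁} {T₂ : CTS C Act S₂}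
  {B : S₁ → S₂ → Prop}

theorem IsSB.symm_s19 [CompleteBooleanAlgebra C] (h : IsSB T₁ T₂ B) : IsSB T₂ T₁ (flip B) := by
  obtain ⟨hinit, hstep⟩ := h
  refine ⟨hinit, fun s₂ s₁ hB => ?_⟩
  obtain ⟨fwd, bwd, term₁, term₂⟩ := hstep s₁ s₂ hB
  exact ⟨bwd, fwd, term₂, term₁⟩

theorem IsCondBisim.isSB [CompleteBooleanAlgebra C] (h : IsCondBisim T₁ T₂ B) :
    IsSB T₁ T₂ B := by
  obtain ⟨hinit, hstep⟩ := h
  refine ⟨hinit, fun s₁ s₂ hB => ?_⟩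
  obtain ⟨fwd, bwd, term₁, term₂⟩ := hstep s₁ s₂ hB
  refine ⟨fun α a s₁' htr => ?_, fun α a s₂' htr => ?_, fun α ht => ?_, fun α ht => ?_⟩
  · obtain ⟨s₂', htr', hB'⟩ := fwd α a s₁' htr
    exact ⟨{(α, s₂')}, by simp, by simpa using ⟨htr', hB'⟩⟩
  · obtain ⟨s₁', htr', hB'⟩ := bwd α a s₂' htr
    exact ⟨{(α, s₁')}, by simp, by simpa using ⟨htr', hB'⟩⟩
  · exact ⟨{α}, by simp, by simpa using term₁ α ht⟩
  · exact ⟨{α}, by simp, by simpa using term₂ α ht⟩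

end

theorem isCondBisim_unf {C Act S : Type*} (T : CTS C Act S) :
    IsCondBisim (unf T) T (fun p s => p.val.2 = s) := by
  refine ⟨rfl, ?_⟩
  rintro p s rfl
  refine ⟨fun α a p' htr => ⟨p'.val.2, htr.2, rfl⟩, fun α a s' htr => ?_,
    fun α ht => ht, fun α ht => ht⟩
  exact ⟨⟨(p.val.1 ++ [(p.val.2, α, a)], s'), p.property.snoc htr⟩, ⟨rfl, htr⟩, rfl⟩

/-- `T` and its unfolding `unf T` are splitting bisimilar; moreover, the
relation relating each path to the state it ends in is a witnessing splitting
bisimulation. -/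
theorem sbisim_unf {C Act S : Type*} [CompleteBooleanAlgebra C]
    (T : CTS C Act S) :
    IsSB (unf T) T (fun p s => p.val.2 = s) ∧ SBisim T (unf T) :=
  have h := (isCondBisim_unf T).isSB
  ⟨h, _, h.symm_s19⟩
end
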